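/- arXiv:1704.00937 — 2 statements merged into one kernel-verified Lean document; each statement's English description precedes it below -/
import Mathlib

section
/- Let D be a connected acyclic digraph with at least 3 vertices. Then the following are equivalent: (i) ⟨D⟩ is a band; (ii) ⟨D⟩ is completely regular; (iii) ⟨D⟩ is regular; (iv) D is directed-bipartite. -/
/-- The transformation of `{1,…,n}` sending `a` to `b` and fixing all other points. -/
def arcT {n : ℕ} (a b : Fin n) : Fin n → Fin n := fun v => if v = a then b else v

/-- The semigroup `⟨D⟩` generated by the arcs of the digraph `D`; transformations act on
the right, so a product `ε₁ε₂⋯ε_k` is the function `ε_k ∘ ⋯ ∘ ε₁`. -/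
def genSg {n : ℕ} (D : Set (Fin n × Fin n)) : Set (Fin n → Fin n) :=
  { α | ∃ l : List (Fin n × Fin n), l ≠ [] ∧ (∀ p ∈ l, p ∈ D) ∧
      α = l.foldl (fun f p => arcT p.1 p.2 ∘ f) id }

/-- The product `x·y` in the right-action convention: apply `x` first, then `y`. -/
def sgMul {n : ℕ} (x y : Fin n → Fin n) : Fin n → Fin n := y ∘ x

/-- The right ideal `xS¹ = {x} ∪ xS`. -/
def rIdeal {n : ℕ} (S : Set (Fin n → Fin n)) (x : Fin n → Fin n) : Set (Fin n → Fin n) :=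
  insert x { y | ∃ s ∈ S, y = sgMul x s }

/-- The left ideal `S¹x = {x} ∪ Sx`. -/
def lIdeal {n : ℕ} (S : Set (Fin n → Fin n)) (x : Fin n → Fin n) : Set (Fin n → Fin n) :=
  insert x { y | ∃ s ∈ S, y = sgMul s x }

/-- The two-sided ideal `S¹xS¹`. -/
def jIdeal {n : ℕ} (S : Set (Fin n → Fin n)) (x : Fin n → Fin n) : Set (Fin n → Fin n) :=
  { y | ∃ s ∈ insert id S, ∃ t ∈ insert id S, y = sgMul s (sgMul x t) }

def RRel {n : ℕ} (S : Set (Fin n → Fin n)) (x y : Fin n → Fin n) : Prop :=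
  rIdeal S x = rIdeal S y

def LRel {n : ℕ} (S : Set (Fin n → Fin n)) (x y : Fin n → Fin n) : Prop :=
  lIdeal S x = lIdeal S y

def JRel {n : ℕ} (S : Set (Fin n → Fin n)) (x y : Fin n → Fin n) : Prop :=
  jIdeal S x = jIdeal S y

def RTrivial {n : ℕ} (S : Set (Fin n → Fin n)) : Prop :=
  ∀ x ∈ S, ∀ y ∈ S, RRel S x y → x = y

def LTrivial {n : ℕ} (S : Set (Fin n → Fin n)) : Prop :=
  ∀ x ∈ S, ∀ y ∈ S, LRel S x y → x = y

def HTrivial {n : ℕ} (S : Set (Fin n → Fin n)) : Prop :=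
  ∀ x ∈ S, ∀ y ∈ S, RRel S x y → LRel S x y → x = y

def JTrivial {n : ℕ} (S : Set (Fin n → Fin n)) : Prop :=
  ∀ x ∈ S, ∀ y ∈ S, JRel S x y → x = y

/-- `α` has a cycle of length `k`: `k` distinct points `a₀,…,a_{k-1}` with
`α(aᵢ) = a_{i+1 mod k}`. -/
def IsCycleOf {n : ℕ} (α : Fin n → Fin n) (k : ℕ) : Prop :=
  0 < k ∧ ∃ a : ZMod k → Fin n, Function.Injective a ∧ ∀ i, α (a i) = a (i + 1)

/-- `l(D)`: the maximal length of a cycle of an element of `⟨D⟩`. -/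
noncomputable def lD {n : ℕ} (D : Set (Fin n × Fin n)) : ℕ :=
  sSup { k | ∃ α ∈ genSg D, IsCycleOf α k }

/-- The arc set of a graph. -/
def arcsOf {n : ℕ} (G : SimpleGraph (Fin n)) : Set (Fin n × Fin n) :=
  { p | G.Adj p.1 p.2 }

/-- `l(G)` for a graph `G`. -/
noncomputable def lG {n : ℕ} (G : SimpleGraph (Fin n)) : ℕ := lD (arcsOf G)

/-- Reachability along directed walks of `D`. -/
def dreach {n : ℕ} (D : Set (Fin n × Fin n)) : Fin n → Fin n → Prop :=
  Relation.ReflTransGen (fun a b => (a, b) ∈ D)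

/-- The strong component of the vertex `v`. -/
def strongComp {n : ℕ} (D : Set (Fin n × Fin n)) (v : Fin n) : Set (Fin n) :=
  { u | dreach D u v ∧ dreach D v u }

/-- The underlying graph of the digraph `D`. -/
def underlying {n : ℕ} (D : Set (Fin n × Fin n)) : SimpleGraph (Fin n) where
  Adj a b := a ≠ b ∧ ((a, b) ∈ D ∨ (b, a) ∈ D)
  symm := ⟨fun a b h => ⟨h.1.symm, h.2.symm⟩⟩
  loopless := ⟨fun a h => h.1 rfl⟩

/-- `v 0, v 1, …, v r` is a cycle of the digraph `D`. -/
def IsDCycle {n : ℕ} (D : Set (Fin n × Fin n)) (r : ℕ) (v : ℕ → Fin n) : Prop :=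
  1 ≤ r ∧ v r = v 0 ∧ (∀ i < r, ∀ j < r, v i = v j → i = j) ∧
    ∀ i < r, (v i, v (i + 1)) ∈ D

def HasDCycle {n : ℕ} (D : Set (Fin n × Fin n)) : Prop := ∃ r v, IsDCycle D r v

def DAcyclic {n : ℕ} (D : Set (Fin n × Fin n)) : Prop := ¬ HasDCycle D

/-- `G` is a subgroup contained in the transformation semigroup `S`. -/
def IsSubgroupIn {n : ℕ} (S G : Set (Fin n → Fin n)) : Prop :=
  G ⊆ S ∧ (∀ x ∈ G, ∀ y ∈ G, sgMul x y ∈ G) ∧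
    ∃ e ∈ G, (∀ x ∈ G, sgMul e x = x ∧ sgMul x e = x) ∧
      ∀ x ∈ G, ∃ y ∈ G, sgMul x y = e ∧ sgMul y x = e

/-- Every subgroup of `S` is trivial. -/
def SgAperiodic {n : ℕ} (S : Set (Fin n → Fin n)) : Prop :=
  ∀ G, IsSubgroupIn S G → G.Subsingleton

/-- `D` is directed-bipartite: the vertices split into `V₁`, `V₂` with every arc going
from `V₁` to `V₂`. -/
def DirectedBipartite {n : ℕ} (D : Set (Fin n × Fin n)) : Prop :=
  ∃ V₁ V₂ : Set (Fin n), Disjoint V₁ V₂ ∧ V₁ ∪ V₂ = Set.univ ∧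
    ∀ p ∈ D, p.1 ∈ V₁ ∧ p.2 ∈ V₂

/-!
Every element of `⟨D⟩` moves each vertex forward along a directed walk of `D`.
If `D` is directed-bipartite, a product of arcs fixes the heads `V₂` pointwise and sends every
other vertex to itself or into `V₂`, hence is idempotent. Conversely, a directed path
`a → b → c` makes `x = (b→c)(a→b)` non-regular when `D` is acyclic: `b` has the single
preimage `a` under `x`, so `xyx = x` forces `y` to send `b` back to `a`, closing a cycle.
-/

open Relation

section

variable {n : ℕ} {D : Set (Fin n × Fin n)}

theorem hasDCycle_of_closed_walk (r : ℕ) (w : ℕ → Fin n) (hr : 1 ≤ r) (hclosed : w r = w 0)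
    (harc : ∀ i < r, (w i, w (i + 1)) ∈ D) : HasDCycle D := by
  induction r using Nat.strong_induction_on generalizing w with
  | _ r ih =>
    -- a repeated vertex `w i = w j` cuts out the shorter closed walk `w i, …, w j`
    have shortcut : ∀ i j, i < j → j < r → w i = w j → HasDCycle D := fun i j hij hj heq =>
      ih (j - i) (by omega) (fun k => w (i + k)) (by omega)
        (by simp [show i + (j - i) = j by omega, heq])
        (fun k hk => by simpa [add_assoc] using harc (i + k) (by omega))
    by_cases hinj : ∀ i < r, ∀ j < r, w i = w j → i = j
    · exact ⟨r, w, hr, hclosed, hinj, harc⟩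
    · push Not at hinj
      obtain ⟨i, hi, j, hj, heq, hne⟩ := hinj
      rcases Nat.lt_or_gt_of_ne hne with hij | hji
      · exact shortcut i j hij hj heq
      · exact shortcut j i hji hi heq.symm

theorem exists_walk_of_transGen {u v : Fin n} (h : TransGen (fun a b => (a, b) ∈ D) u v) :
    ∃ (r : ℕ) (w : ℕ → Fin n), 1 ≤ r ∧ w 0 = u ∧ w r = v ∧
      ∀ i < r, (w i, w (i + 1)) ∈ D := by
  induction h using TransGen.head_induction_on with
  | @single a hab =>
    exact ⟨1, fun i => if i = 0 then a else v, le_rfl, rfl, rfl, by simpa using hab⟩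
  | @head a b hab _ ih =>
    obtain ⟨r, w, hr, h0, hrv, harc⟩ := ih
    refine ⟨r + 1, fun i => if i = 0 then a else w (i - 1), by omega, rfl, by simpa using hrv, ?_⟩
    rintro (_ | i) hi
    · simpa [h0] using hab
    · simpa using harc i (by omega)

theorem DAcyclic.not_dreach_of_mem (hacyc : DAcyclic D) {a b : Fin n} (hab : (a, b) ∈ D) :
    ¬ dreach D b a := fun hba => by
  obtain ⟨r, w, hr, h0, hra, harc⟩ := exists_walk_of_transGen (TransGen.head' hab hba)
  exact hacyc (hasDCycle_of_closed_walk r w hr (hra.trans h0.symm) harc)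

theorem directedBipartite_of_forall_not_mem (h : ∀ a b c, (a, b) ∈ D → (b, c) ∉ D) :
    DirectedBipartite D :=
  ⟨{v | ∃ u, (u, v) ∈ D}ᶜ, {v | ∃ u, (u, v) ∈ D}, disjoint_compl_left, Set.compl_union_self _,
    fun p hp => ⟨fun ⟨u, hu⟩ => h u p.1 p.2 hu hp, p.1, hp⟩⟩

theorem genSg_induction {P : (Fin n → Fin n) → Prop} (hid : P id)
    (hstep : ∀ f a b, (a, b) ∈ D → P f → P (arcT a b ∘ f)) {α : Fin n → Fin n}
    (hα : α ∈ genSg D) : P α := by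
  obtain ⟨l, -, hl, rfl⟩ := hα
  suffices ∀ f, P f → P (l.foldl (fun f p => arcT p.1 p.2 ∘ f) f) from this id hid
  induction l with
  | nil => exact fun f hf => hf
  | cons p l ih =>
    intro f hf
    exact ih (fun q hq => hl q (.tail _ hq)) _ (hstep f p.1 p.2 (hl p (.head _)) hf)

theorem arcT_comp_arcT_mem_genSg {a b c : Fin n} (hab : (a, b) ∈ D) (hbc : (b, c) ∈ D) :
    arcT a b ∘ arcT b c ∈ genSg D :=
  ⟨[(b, c), (a, b)], List.cons_ne_nil _ _, by simp [hab, hbc], rfl⟩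

theorem dreach_apply_of_mem_genSg {α : Fin n → Fin n} (hα : α ∈ genSg D) (u : Fin n) :
    dreach D u (α u) := by
  revert u
  refine genSg_induction (P := fun f => ∀ u, dreach D u (f u)) (fun _ => .refl) ?_ hα
  intro f a b hab hf u
  by_cases hfu : f u = a
  · rw [Function.comp_apply, show arcT a b (f u) = b by simp [arcT, hfu]]
    exact (hf u).tail (hfu ▸ hab)
  · rw [Function.comp_apply, show arcT a b (f u) = f u by simp [arcT, hfu]]
    exact hf u

theorem sgMul_self_of_directedBipartite (hD : DirectedBipartite D) {x : Fin n → Fin n}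
    (hx : x ∈ genSg D) : sgMul x x = x := by
  obtain ⟨V₁, V₂, hdisj, -, harc⟩ := hD
  have hx : (∀ v ∈ V₂, x v = v) ∧ ∀ v, x v = v ∨ x v ∈ V₂ := by
    refine genSg_induction (P := fun f => (∀ v ∈ V₂, f v = v) ∧ ∀ v, f v = v ∨ f v ∈ V₂)
      ⟨fun _ _ => rfl, fun _ => .inl rfl⟩ ?_ hx
    rintro f a b hab ⟨hfix, hmove⟩
    have ha : a ∉ V₂ := Set.disjoint_left.mp hdisj (harc _ hab).1
    refine ⟨fun v hv => ?_, fun v => ?_⟩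
    · simp [arcT, hfix v hv, show v ≠ a by rintro rfl; exact ha hv]
    · by_cases hfv : f v = a
      · simpa [arcT, hfv] using .inr (harc _ hab).2
      · simpa [arcT, hfv] using hmove v
  funext v
  rcases hx.2 v with hv | hv
  · simp [sgMul, hv]
  · exact hx.1 _ hv

theorem DAcyclic.sgMul_sgMul_ne (hacyc : DAcyclic D) {a b c : Fin n} (hab : (a, b) ∈ D)
    (hbc : (b, c) ∈ D) {y : Fin n → Fin n} (hy : y ∈ genSg D) :
    sgMul (sgMul (arcT a b ∘ arcT b c) y) (arcT a b ∘ arcT b c) ≠ arcT a b ∘ arcT b c := by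
  intro hreg
  have hab' : a ≠ b := fun h => hacyc.not_dreach_of_mem hab (h ▸ .refl)
  have hbc' : b ≠ c := fun h => hacyc.not_dreach_of_mem hbc (h ▸ .refl)
  have hac : a ≠ c := fun h => hacyc.not_dreach_of_mem hab (.single (h ▸ hbc))
  -- evaluate `x y x = x` at `a`: `x (y b) = b`, and `a` is the only preimage of `b` under `x`
  have hyb : y b = a := by
    have := congrFun hreg a
    by_cases h₁ : y b = b
    · simp [sgMul, arcT, hab', h₁, hbc'.symm, hac.symm] at this
    · by_contra h₂
      simp [sgMul, arcT, hab', h₁, h₂] at this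
  exact hacyc.not_dreach_of_mem hab (hyb ▸ dreach_apply_of_mem_genSg hy b)

theorem isSubgroupIn_singleton {S : Set (Fin n → Fin n)} {x : Fin n → Fin n}
    (hx : x ∈ S) (hxx : sgMul x x = x) : IsSubgroupIn S {x} := by
  refine ⟨Set.singleton_subset_iff.mpr hx, ?_, x, rfl, ?_, ?_⟩ <;> simp [hxx]

theorem IsSubgroupIn.exists_sgMul_sgMul_eq {S G : Set (Fin n → Fin n)}
    (hG : IsSubgroupIn S G) {x : Fin n → Fin n} (hx : x ∈ G) :
    ∃ y ∈ S, sgMul (sgMul x y) x = x := by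
  obtain ⟨hGS, -, e, -, hid, hinv⟩ := hG
  obtain ⟨y, hy, hxy, -⟩ := hinv x hx
  exact ⟨y, hGS hy, hxy ▸ (hid x hx).1⟩

end

theorem stmt15_general (n : ℕ) (D : Set (Fin n × Fin n)) (hacyc : DAcyclic D) :
    List.TFAE [
      ∀ x ∈ genSg D, sgMul x x = x,
      ∀ x ∈ genSg D, ∃ G, IsSubgroupIn (genSg D) G ∧ x ∈ G,
      ∀ x ∈ genSg D, ∃ y ∈ genSg D, sgMul (sgMul x y) x = x,
      DirectedBipartite D] := by
  tfae_have 1 → 2 := fun h x hx => ⟨{x}, isSubgroupIn_singleton hx (h x hx), rfl⟩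
  tfae_have 2 → 3 := fun h x hx => by
    obtain ⟨G, hG, hxG⟩ := h x hx
    exact hG.exists_sgMul_sgMul_eq hxG
  tfae_have 3 → 4 := fun h => directedBipartite_of_forall_not_mem fun a b c hab hbc => by
    obtain ⟨y, hy, hreg⟩ := h _ (arcT_comp_arcT_mem_genSg hab hbc)
    exact hacyc.sgMul_sgMul_ne hab hbc hy hreg
  tfae_have 4 → 1 := fun hD x hx => sgMul_self_of_directedBipartite hD hx
  tfae_finish

/-- For a connected acyclic digraph with at least three vertices the
following are equivalent: `⟨D⟩` is a band; `⟨D⟩` is completely regular; `⟨D⟩` is regular;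
`D` is directed-bipartite. -/
theorem stmt15 (n : ℕ) (hn : 3 ≤ n) (D : Set (Fin n × Fin n))
    (hloop : ∀ u : Fin n, (u, u) ∉ D) (hconn : (underlying D).Connected)
    (hacyc : DAcyclic D) :
    List.TFAE [
      ∀ x ∈ genSg D, sgMul x x = x,
      ∀ x ∈ genSg D, ∃ G, IsSubgroupIn (genSg D) G ∧ x ∈ G,
      ∀ x ∈ genSg D, ∃ y ∈ genSg D, sgMul (sgMul x y) x = x,
      DirectedBipartite D] :=
  stmt15_general n D hacyc
end

section
/- Let D be a connected digraph with n≥2 vertices. Then the following are equivalent: (i) ⟨D⟩ is isomorphic to the free semilattice of degree n−1, i.e. the semigroup of nonempty subsets of an (n−1)-element set under union; (ii) ⟨D⟩ is an inverse semigroup; (iii) ⟨D⟩ is commutative; (iv) D is a fan. Moreover, if any of these holds then |⟨D⟩| = 2^{n−1} − 1. -/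
/-- `S` is isomorphic to the free semilattice of degree `d`, i.e. the semigroup of
nonempty subsets of a `d`-element set under union. -/
def IsFreeSemilattice {n : ℕ} (S : Set (Fin n → Fin n)) (d : ℕ) : Prop :=
  ∃ f : (Fin n → Fin n) → Finset (Fin d),
    Set.BijOn f S { A : Finset (Fin d) | A ≠ ∅ } ∧
    ∀ x ∈ S, ∀ y ∈ S, f (sgMul x y) = f x ∪ f y

/-- `S` is an inverse semigroup: every element has a unique semigroup inverse. -/
def InverseSg {n : ℕ} (S : Set (Fin n → Fin n)) : Prop :=
  ∀ x ∈ S, ∃! y, y ∈ S ∧ sgMul (sgMul x y) x = x ∧ sgMul (sgMul y x) y = y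

/-- `S` is commutative. -/
def CommSg {n : ℕ} (S : Set (Fin n → Fin n)) : Prop :=
  ∀ x ∈ S, ∀ y ∈ S, sgMul x y = sgMul y x

/-- `D` is a fan: isomorphic to an `m`-fan, the digraph on `{1,…,m}` with the arcs
`(i, m)` for `1 ≤ i ≤ m - 1`. -/
def IsFan {n : ℕ} (D : Set (Fin n × Fin n)) : Prop :=
  ∃ (m : ℕ), 1 ≤ m ∧ ∃ e : Fin n ≃ Fin m,
    ∀ a b : Fin n, ((a, b) ∈ D ↔ ((e b).val = m - 1 ∧ (e a).val ≠ m - 1))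

/-!
The generators `(a→b)` are idempotents, and idempotents of an inverse semigroup commute, so both
inverseness and commutativity make the generators commute. Two arcs `a→b`, `a→c` with `b ≠ c`,
or a path `a→b→c`, give non-commuting generators; in a connected digraph with neither
configuration all arcs point to one vertex `z` without out-arcs, i.e. `D` is a fan.
Conversely, for a fan with center `z` the elements of `⟨D⟩` are exactly the maps collapsing a
nonempty set `B ⊆ V ∖ {z}` onto `z`, and their product corresponds to the union of the sets,
so `⟨D⟩` is the free semilattice on `V ∖ {z}`.
-/

open Function

variable {n : ℕ}

section Generation

variable {D : Set (Fin n × Fin n)}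

theorem arcT_mem_genSg {a b : Fin n} (h : (a, b) ∈ D) : arcT a b ∈ genSg D :=
  ⟨[(a, b)], by simp, by simpa using h, rfl⟩

theorem sgMul_arcT_mem_genSg {x : Fin n → Fin n} {a b : Fin n} (hx : x ∈ genSg D)
    (h : (a, b) ∈ D) : sgMul x (arcT a b) ∈ genSg D := by
  obtain ⟨l, hl, hlD, rfl⟩ := hx
  refine ⟨l ++ [(a, b)], by simp, fun p hp => ?_, by simp [sgMul]⟩
  rcases List.mem_append.1 hp with hp | hp
  exacts [hlD p hp, List.mem_singleton.1 hp ▸ h]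

theorem genSg_induction_s16 {P : (Fin n → Fin n) → Prop}
    (arc : ∀ a b, (a, b) ∈ D → P (arcT a b))
    (mul_arc : ∀ x a b, P x → (a, b) ∈ D → P (sgMul x (arcT a b))) :
    ∀ x ∈ genSg D, P x := by
  rintro _ ⟨_ | ⟨p, l⟩, hl, hlD, rfl⟩
  · exact absurd rfl hl
  have key : ∀ (l : List (Fin n × Fin n)) (acc : Fin n → Fin n), (∀ q ∈ l, q ∈ D) → P acc →
      P (l.foldl (fun f q => arcT q.1 q.2 ∘ f) acc) := by
    intro l
    induction l with
    | nil => exact fun _ _ h => h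
    | cons q l ih =>
      intro acc hD hacc
      exact ih _ (fun r hr => hD r (List.mem_cons_of_mem _ hr))
        (mul_arc _ _ _ hacc (hD q List.mem_cons_self))
  exact key l _ (fun q hq => hlD q (List.mem_cons_of_mem _ hq)) (arc _ _ (hlD p List.mem_cons_self))

theorem sgMul_mem_genSg {x y : Fin n → Fin n} (hx : x ∈ genSg D) (hy : y ∈ genSg D) :
    sgMul x y ∈ genSg D :=
  genSg_induction_s16 (P := fun y => sgMul x y ∈ genSg D)
    (fun _ _ h => sgMul_arcT_mem_genSg hx h) (fun _ _ _ hxy h => sgMul_arcT_mem_genSg hxy h) y hy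

end Generation

section AbstractSemigroup

variable {S : Set (Fin n → Fin n)}

def IsSgInverse (x y : Fin n → Fin n) : Prop :=
  sgMul (sgMul x y) x = x ∧ sgMul (sgMul y x) y = y

theorem IsSgInverse.symm {x y : Fin n → Fin n} (h : IsSgInverse x y) : IsSgInverse y x :=
  And.symm h

theorem isSgInverse_self {e : Fin n → Fin n} (he : sgMul e e = e) : IsSgInverse e e := by
  simp only [IsSgInverse, he, and_self]

theorem InverseSg.eq_of_isSgInverse (hS : InverseSg S) {x y y' : Fin n → Fin n} (hx : x ∈ S)
    (hy : y ∈ S) (hy' : y' ∈ S) (h : IsSgInverse x y) (h' : IsSgInverse x y') : y = y' :=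
  (hS x hx).unique ⟨hy, h⟩ ⟨hy', h'⟩

/-- If `x` is the inverse of `ef`, so is `fxe`; uniqueness makes `x = fxe` idempotent, and an
idempotent is its own inverse. -/
theorem InverseSg.sgMul_idem (hS : InverseSg S) (hmul : ∀ x ∈ S, ∀ y ∈ S, sgMul x y ∈ S)
    {e f : Fin n → Fin n} (he : e ∈ S) (hf : f ∈ S) (hee : sgMul e e = e) (hff : sgMul f f = f) :
    sgMul (sgMul e f) (sgMul e f) = sgMul e f := by
  have hef := hmul e he f hf
  obtain ⟨x, ⟨hx, hefx, hxef⟩, -⟩ := hS _ hef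
  have hfxe : sgMul (sgMul f x) e ∈ S := hmul _ (hmul f hf x hx) e he
  have hinv : IsSgInverse (sgMul e f) (sgMul (sgMul f x) e) := by
    constructor
    · change sgMul e (sgMul (sgMul f f) (sgMul x (sgMul (sgMul e e) f))) = _
      rw [hee, hff]
      exact hefx
    · change sgMul f (sgMul (sgMul (sgMul x (sgMul (sgMul e e) (sgMul f f))) x) e) = _
      rw [hee, hff, hxef]
      rfl
  have hx_eq : sgMul (sgMul f x) e = x := hS.eq_of_isSgInverse hef hfxe hx hinv ⟨hefx, hxef⟩
  have hxx : sgMul x x = x := by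
    rw [← hx_eq]
    change sgMul f (sgMul (sgMul (sgMul x (sgMul e f)) x) e) = _
    rw [hxef]
    rfl
  rw [hS.eq_of_isSgInverse hx hef hx (IsSgInverse.symm ⟨hefx, hxef⟩) (isSgInverse_self hxx)]
  exact hxx

theorem InverseSg.idem_comm (hS : InverseSg S) (hmul : ∀ x ∈ S, ∀ y ∈ S, sgMul x y ∈ S)
    {e f : Fin n → Fin n} (he : e ∈ S) (hf : f ∈ S) (hee : sgMul e e = e) (hff : sgMul f f = f) :
    sgMul e f = sgMul f e := by
  have hef := hS.sgMul_idem hmul he hf hee hff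
  have hfe := hS.sgMul_idem hmul hf he hff hee
  have hinv : IsSgInverse (sgMul e f) (sgMul f e) := by
    constructor
    · change sgMul e (sgMul (sgMul f f) (sgMul (sgMul e e) f)) = _
      rw [hee, hff]
      exact hef
    · change sgMul f (sgMul (sgMul e e) (sgMul (sgMul f f) e)) = _
      rw [hee, hff]
      exact hfe
  exact (hS.eq_of_isSgInverse (hmul e he f hf) (hmul f hf e he) (hmul e he f hf) hinv
    (isSgInverse_self hef)).symm

theorem IsFreeSemilattice.commSg {d : ℕ} (h : IsFreeSemilattice S d)
    (hmul : ∀ x ∈ S, ∀ y ∈ S, sgMul x y ∈ S) : CommSg S := by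
  obtain ⟨f, hf, hunion⟩ := h
  intro x hx y hy
  apply hf.injOn (hmul x hx y hy) (hmul y hy x hx)
  rw [hunion x hx y hy, hunion y hy x hx, Finset.union_comm]

/-- Every element of a semilattice is its own unique inverse. -/
theorem IsFreeSemilattice.inverseSg {d : ℕ} (h : IsFreeSemilattice S d)
    (hmul : ∀ x ∈ S, ∀ y ∈ S, sgMul x y ∈ S) : InverseSg S := by
  obtain ⟨f, hf, hunion⟩ := h
  have f_inv : ∀ x ∈ S, ∀ y ∈ S, sgMul (sgMul x y) x = x → f y ⊆ f x := by
    intro x hx y hy hxyx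
    rw [← hxyx, hunion _ (hmul x hx y hy) x hx, hunion x hx y hy]
    exact Finset.subset_union_right.trans Finset.subset_union_left
  intro x hx
  have hxxx : sgMul (sgMul x x) x = x := by
    apply hf.injOn (hmul _ (hmul x hx x hx) x hx) hx
    rw [hunion _ (hmul x hx x hx) x hx, hunion x hx x hx, Finset.union_self, Finset.union_self]
  refine ⟨x, ⟨hx, hxxx, hxxx⟩, fun y ⟨hy, hxyx, hyxy⟩ => hf.injOn hy hx ?_⟩
  exact (f_inv x hx y hy hxyx).antisymm (f_inv y hy x hx hyxy)

theorem IsFreeSemilattice.ncard_eq {d : ℕ} (h : IsFreeSemilattice S d) :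
    S.ncard = 2 ^ d - 1 := by
  obtain ⟨f, hf, -⟩ := h
  rw [← hf.injOn.ncard_image, hf.image_eq, ← Set.compl_singleton_eq,
    Set.ncard_compl, Set.ncard_singleton, Nat.card_eq_fintype_card,
    Fintype.card_finset, Fintype.card_fin]

theorem isFreeSemilattice_image {ι : Type*} [Fintype ι] [DecidableEq ι]
    (Φ : Finset ι → Fin n → Fin n) (hΦ : Injective Φ)
    (hunion : ∀ B C, B.Nonempty → C.Nonempty → Φ (B ∪ C) = sgMul (Φ B) (Φ C)) :
    IsFreeSemilattice (Φ '' {B | B.Nonempty}) (Fintype.card ι) := by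
  set e := Fintype.equivFin ι
  have hinv : ∀ B, invFun Φ (Φ B) = B := leftInverse_invFun hΦ
  refine ⟨fun x => (invFun Φ x).map e.toEmbedding, ⟨?_, ?_, ?_⟩, ?_⟩
  · rintro _ ⟨B, hB, rfl⟩
    simpa [hinv, ← Finset.nonempty_iff_ne_empty] using hB
  · rintro _ ⟨B, -, rfl⟩ _ ⟨C, -, rfl⟩ h
    exact congrArg Φ (by simpa [hinv] using h)
  · intro A hA
    have hA' : (A.map e.symm.toEmbedding).Nonempty := by
      simpa [Finset.nonempty_iff_ne_empty] using hA
    refine ⟨Φ (A.map e.symm.toEmbedding), ⟨_, hA', rfl⟩, ?_⟩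
    simp [hinv, Finset.map_map]
  · rintro _ ⟨B, hB, rfl⟩ _ ⟨C, hC, rfl⟩
    dsimp only
    rw [← hunion B C hB hC, hinv, hinv, hinv, Finset.map_union]

end AbstractSemigroup

section Fans

def IsFanWithCenter (D : Set (Fin n × Fin n)) (z : Fin n) : Prop :=
  ∀ a b, (a, b) ∈ D ↔ b = z ∧ a ≠ z

theorem isFanWithCenter_iff_of_equiv {m : ℕ} (hm : 1 ≤ m) (D : Set (Fin n × Fin n))
    (e : Fin n ≃ Fin m) :
    (∀ a b, (a, b) ∈ D ↔ ((e b).val = m - 1 ∧ (e a).val ≠ m - 1)) ↔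
      IsFanWithCenter D (e.symm ⟨m - 1, by omega⟩) := by
  have key : ∀ v, (e v).val = m - 1 ↔ v = e.symm ⟨m - 1, by omega⟩ := fun v => by
    rw [e.eq_symm_apply, Fin.ext_iff]
  simp only [IsFanWithCenter, ne_eq, key]

theorem isFan_iff_exists_isFanWithCenter (D : Set (Fin n × Fin n)) :
    IsFan D ↔ ∃ z, IsFanWithCenter D z := by
  constructor
  · rintro ⟨m, hm, e, he⟩
    exact ⟨_, (isFanWithCenter_iff_of_equiv hm D e).1 he⟩
  · rintro ⟨z, hz⟩
    have hn : 1 ≤ n := Fin.pos z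
    let last : Fin n := ⟨n - 1, by omega⟩
    refine ⟨n, hn, Equiv.swap z last, (isFanWithCenter_iff_of_equiv hn D _).2 ?_⟩
    simpa [last] using hz

def collapse (z : Fin n) (B : Finset {v // v ≠ z}) : Fin n → Fin n :=
  fun v => if v ∈ B.map (Embedding.subtype _) then z else v

theorem collapse_singleton {z a : Fin n} (ha : a ≠ z) : collapse z {⟨a, ha⟩} = arcT a z := by
  funext v
  simp [collapse, arcT]

theorem collapse_union (z : Fin n) (B C : Finset {v // v ≠ z}) :
    collapse z (B ∪ C) = sgMul (collapse z B) (collapse z C) := by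
  funext v
  by_cases hB : v ∈ B.map (Embedding.subtype _) <;>
    simp [collapse, sgMul, hB, Finset.map_union]

theorem collapse_injective (z : Fin n) : Injective (collapse z) := by
  intro B C h
  ext ⟨v, hv⟩
  have := congrFun h v
  by_cases hB : (⟨v, hv⟩ : {v // v ≠ z}) ∈ B <;> by_cases hC : (⟨v, hv⟩ : {v // v ≠ z}) ∈ C <;>
    simp_all [collapse, hv.symm]

variable {D : Set (Fin n × Fin n)} {z : Fin n}

theorem IsFanWithCenter.genSg_eq (hD : IsFanWithCenter D z) :
    genSg D = collapse z '' {B | B.Nonempty} := by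
  apply subset_antisymm
  · apply genSg_induction_s16
    · intro a b hab
      obtain ⟨rfl, ha⟩ := (hD a b).1 hab
      exact ⟨{⟨a, ha⟩}, Finset.singleton_nonempty _, collapse_singleton ha⟩
    · rintro _ a b ⟨B, hB, rfl⟩ hab
      obtain ⟨rfl, ha⟩ := (hD a b).1 hab
      exact ⟨B ∪ {⟨a, ha⟩}, hB.mono Finset.subset_union_left,
        by rw [collapse_union, collapse_singleton]⟩
  · rintro _ ⟨B, hB, rfl⟩
    induction hB using Finset.Nonempty.cons_induction with
    | singleton a =>
      rw [collapse_singleton]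
      exact arcT_mem_genSg ((hD _ _).2 ⟨rfl, a.2⟩)
    | cons a B _ _ ih =>
      rw [Finset.cons_eq_insert, Finset.insert_eq, Finset.union_comm, collapse_union,
        collapse_singleton]
      exact sgMul_arcT_mem_genSg ih ((hD _ _).2 ⟨rfl, a.2⟩)

theorem IsFanWithCenter.isFreeSemilattice (hD : IsFanWithCenter D z) :
    IsFreeSemilattice (genSg D) (n - 1) := by
  have hcard : Fintype.card {v // v ≠ z} = n - 1 := by simp
  rw [hD.genSg_eq, ← hcard]
  exact isFreeSemilattice_image _ (collapse_injective z) fun B C _ _ => collapse_union z B C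

end Fans

section CommutingArcs

theorem arcT_idem {a b : Fin n} (hab : a ≠ b) : sgMul (arcT a b) (arcT a b) = arcT a b := by
  funext v
  by_cases h : v = a <;> simp [sgMul, arcT, h, hab.symm]

theorem eq_of_arcT_comm {a b c : Fin n} (hab : a ≠ b) (hac : a ≠ c)
    (h : sgMul (arcT a b) (arcT a c) = sgMul (arcT a c) (arcT a b)) : b = c := by
  simpa [sgMul, arcT, hab.symm, hac.symm] using congrFun h a

theorem arcT_not_comm {a b c : Fin n} (hab : a ≠ b) (hbc : b ≠ c) :
    sgMul (arcT a b) (arcT b c) ≠ sgMul (arcT b c) (arcT a b) := fun h => hbc <| by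
  simpa [sgMul, arcT, hab, hab.symm] using (congrFun h a).symm

variable {D : Set (Fin n × Fin n)}

theorem forall_eq_or_mem_of_sink (hconn : (underlying D).Preconnected) {z : Fin n}
    (hsink : ∀ v, (z, v) ∉ D) (hfork : ∀ {a b c}, (a, b) ∈ D → (a, c) ∈ D → b = c)
    (hpath : ∀ {a b c}, (a, b) ∈ D → (b, c) ∉ D) (v : Fin n) : v = z ∨ (v, z) ∈ D := by
  have hreach := (SimpleGraph.reachable_iff_reflTransGen z v).1 (hconn z v)
  induction hreach with
  | refl => exact Or.inl rfl
  | tail _ hadj ih =>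
    obtain ⟨-, hout | hin⟩ := hadj
    · obtain rfl | huz := ih
      · exact absurd hout (hsink _)
      · exact Or.inl (hfork hout huz)
    · obtain rfl | huz := ih
      · exact Or.inr hin
      · exact absurd huz (hpath hin)

theorem exists_isFanWithCenter_of_arcT_comm (hloop : ∀ u : Fin n, (u, u) ∉ D)
    (hconn : (underlying D).Connected)
    (hcomm : ∀ a b c d, (a, b) ∈ D → (c, d) ∈ D →
      sgMul (arcT a b) (arcT c d) = sgMul (arcT c d) (arcT a b)) :
    ∃ z, IsFanWithCenter D z := by
  have hne : ∀ {a b}, (a, b) ∈ D → a ≠ b := fun h hab => hloop _ (hab ▸ h)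
  have hfork : ∀ {a b c}, (a, b) ∈ D → (a, c) ∈ D → b = c := fun h h' =>
    eq_of_arcT_comm (hne h) (hne h') (hcomm _ _ _ _ h h')
  have hpath : ∀ {a b c}, (a, b) ∈ D → (b, c) ∉ D := fun h h' =>
    arcT_not_comm (hne h) (hne h') (hcomm _ _ _ _ h h')
  obtain ⟨z, hsink⟩ : ∃ z, ∀ v, (z, v) ∉ D := by
    by_cases h : ∃ a z, (a, z) ∈ D
    · obtain ⟨a, z, h⟩ := h
      exact ⟨z, fun _ => hpath h⟩
    · simp only [not_exists] at h
      exact ⟨hconn.nonempty.some, fun _ => h _ _⟩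
  have hstar := forall_eq_or_mem_of_sink hconn.preconnected hsink hfork hpath
  refine ⟨z, fun a b => ⟨fun hab => ?_, ?_⟩⟩
  · have haz : a ≠ z := by rintro rfl; exact hsink b hab
    exact ⟨hfork hab ((hstar a).resolve_left haz), haz⟩
  · rintro ⟨rfl, haz⟩
    exact (hstar a).resolve_left haz

theorem isFan_of_arcT_comm (hloop : ∀ u : Fin n, (u, u) ∉ D)
    (hconn : (underlying D).Connected)
    (hcomm : ∀ a b c d, (a, b) ∈ D → (c, d) ∈ D →
      sgMul (arcT a b) (arcT c d) = sgMul (arcT c d) (arcT a b)) : IsFan D :=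
  (isFan_iff_exists_isFanWithCenter D).2 (exists_isFanWithCenter_of_arcT_comm hloop hconn hcomm)

end CommutingArcs

theorem stmt16_general (n : ℕ) (D : Set (Fin n × Fin n))
    (hloop : ∀ u : Fin n, (u, u) ∉ D) (hconn : (underlying D).Connected) :
    List.TFAE [
      IsFreeSemilattice (genSg D) (n - 1),
      InverseSg (genSg D),
      CommSg (genSg D),
      IsFan D] ∧
    (IsFan D → (genSg D).ncard = 2 ^ (n - 1) - 1) := by
  have hmul : ∀ x ∈ genSg D, ∀ y ∈ genSg D, sgMul x y ∈ genSg D :=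
    fun _ hx _ hy => sgMul_mem_genSg hx hy
  have hfree : IsFan D → IsFreeSemilattice (genSg D) (n - 1) := fun h => by
    obtain ⟨z, hz⟩ := (isFan_iff_exists_isFanWithCenter D).1 h
    exact hz.isFreeSemilattice
  have hne : ∀ {a b}, (a, b) ∈ D → a ≠ b := fun h hab => hloop _ (hab ▸ h)
  refine ⟨?_, fun h => (hfree h).ncard_eq⟩
  tfae_have 1 → 2 := fun h => h.inverseSg hmul
  tfae_have 1 → 3 := fun h => h.commSg hmul
  tfae_have 2 → 4 := fun h => isFan_of_arcT_comm hloop hconn fun _ _ _ _ hab hcd =>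
    h.idem_comm hmul (arcT_mem_genSg hab) (arcT_mem_genSg hcd) (arcT_idem (hne hab))
      (arcT_idem (hne hcd))
  tfae_have 3 → 4 := fun h => isFan_of_arcT_comm hloop hconn fun _ _ _ _ hab hcd =>
    h _ (arcT_mem_genSg hab) _ (arcT_mem_genSg hcd)
  tfae_have 4 → 1 := hfree
  tfae_finish

/-- For a connected digraph on `n ≥ 2` vertices the following are
equivalent: `⟨D⟩` is a free semilattice of degree `n - 1`; `⟨D⟩` is inverse; `⟨D⟩` is
commutative; `D` is a fan.  Moreover, in that case `|⟨D⟩| = 2^(n-1) - 1`. -/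
theorem stmt16 (n : ℕ) (hn : 2 ≤ n) (D : Set (Fin n × Fin n))
    (hloop : ∀ u : Fin n, (u, u) ∉ D) (hconn : (underlying D).Connected) :
    List.TFAE [
      IsFreeSemilattice (genSg D) (n - 1),
      InverseSg (genSg D),
      CommSg (genSg D),
      IsFan D] ∧
    (IsFan D → (genSg D).ncard = 2 ^ (n - 1) - 1) :=
  stmt16_general n D hloop hconn
end
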